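/- arXiv:2408.10941 — 6 statements merged into one kernel-verified Lean document; each statement's English description precedes it below -/
import Mathlib

section
/- Let k_ρ, k_α, λ > 0 and let f : ℝ³ → ℝ³ be the nominal closed-loop kinematics vector field f(ρ, φ, α) = (−k_ρ cos²(α) ρ, −k_ρ sinc(2α) α, −k_α α + λ k_ρ sinc(2α) φ). Define V₁(ρ, φ, α) := ½(ρ² + λφ² + α²). Then the derivative of V₁ along f satisfies, for all (ρ, φ, α) ∈ ℝ³, ∇V₁(ρ, φ, α) · f(ρ, φ, α) = −k_ρ cos²(α) ρ² − k_α α², which is nonpositive. -/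
open Real

noncomputable def sinc (s : ℝ) : ℝ := if s = 0 then 1 else Real.sin s / s

theorem fderiv_weighted_sq_half_apply (lam : ℝ) (p v : ℝ × ℝ × ℝ) :
    fderiv ℝ (fun q : ℝ × ℝ × ℝ => (q.1 ^ 2 + lam * q.2.1 ^ 2 + q.2.2 ^ 2) / 2) p v =
      p.1 * v.1 + lam * p.2.1 * v.2.1 + p.2.2 * v.2.2 := by
  have hρ := (hasFDerivAt_fst (𝕜 := ℝ) (p := p)).pow 2
  have hφ := ((hasFDerivAt_snd (𝕜 := ℝ) (p := p)).fst.pow 2).const_mul lam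
  have hα := (hasFDerivAt_snd (𝕜 := ℝ) (p := p)).snd.pow 2
  have hV : HasFDerivAt (fun q : ℝ × ℝ × ℝ => (q.1 ^ 2 + lam * q.2.1 ^ 2 + q.2.2 ^ 2) / 2) _ p :=
    ((hρ.fun_add hφ).fun_add hα).mul_const 2⁻¹
  rw [hV.fderiv]
  simp only [Nat.add_one_sub_one, pow_one, nsmul_eq_mul, Nat.cast_ofNat, smul_add,
    add_apply, smul_apply, ContinuousLinearMap.coe_fst',
    smul_eq_mul, ContinuousLinearMap.comp_apply, ContinuousLinearMap.coe_snd']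
  ring

theorem weak_Lyapunov_derivative_general
    (kρ kα lam : ℝ) (hkρ : 0 < kρ) (hkα : 0 < kα)
    (f : ℝ × ℝ × ℝ → ℝ × ℝ × ℝ)
    (hf : ∀ p : ℝ × ℝ × ℝ,
      f p = (-kρ * Real.cos p.2.2 ^ 2 * p.1,
             -kρ * _root_.sinc (2 * p.2.2) * p.2.2,
             -kα * p.2.2 + lam * kρ * _root_.sinc (2 * p.2.2) * p.2.1))
    (V₁ : ℝ × ℝ × ℝ → ℝ)
    (hV₁ : ∀ p : ℝ × ℝ × ℝ, V₁ p = (p.1 ^ 2 + lam * p.2.1 ^ 2 + p.2.2 ^ 2) / 2) :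
    ∀ p : ℝ × ℝ × ℝ,
      fderiv ℝ V₁ p (f p) = -kρ * Real.cos p.2.2 ^ 2 * p.1 ^ 2 - kα * p.2.2 ^ 2 ∧
      fderiv ℝ V₁ p (f p) ≤ 0 := by
  intro p
  -- The coupling terms `∓ λ k_ρ sinc(2α) φ α` from the φ- and α-components cancel.
  have hderiv : fderiv ℝ V₁ p (f p) = -kρ * Real.cos p.2.2 ^ 2 * p.1 ^ 2 - kα * p.2.2 ^ 2 := by
    rw [funext hV₁, fderiv_weighted_sq_half_apply, hf p]
    ring
  refine ⟨hderiv, hderiv ▸ ?_⟩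
  have hρ_term : 0 ≤ kρ * Real.cos p.2.2 ^ 2 * p.1 ^ 2 := by positivity
  have hα_term : 0 ≤ kα * p.2.2 ^ 2 := by positivity
  linarith

/-- The derivative of the weak Lyapunov function `V₁(ρ, φ, α) = ½(ρ² + λφ² + α²)`
along the nominal closed-loop kinematics vector field
`f(ρ, φ, α) = (-k_ρ cos²(α) ρ, -k_ρ sinc(2α) α, -k_α α + λ k_ρ sinc(2α) φ)`
equals `-k_ρ cos²(α) ρ² - k_α α²`, which is nonpositive. -/
theorem weak_Lyapunov_derivative
    (kρ kα lam : ℝ) (hkρ : 0 < kρ) (hkα : 0 < kα) (hlam : 0 < lam)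
    (f : ℝ × ℝ × ℝ → ℝ × ℝ × ℝ)
    (hf : ∀ p : ℝ × ℝ × ℝ,
      f p = (-kρ * Real.cos p.2.2 ^ 2 * p.1,
             -kρ * _root_.sinc (2 * p.2.2) * p.2.2,
             -kα * p.2.2 + lam * kρ * _root_.sinc (2 * p.2.2) * p.2.1))
    (V₁ : ℝ × ℝ × ℝ → ℝ)
    (hV₁ : ∀ p : ℝ × ℝ × ℝ, V₁ p = (p.1 ^ 2 + lam * p.2.1 ^ 2 + p.2.2 ^ 2) / 2) :
    ∀ p : ℝ × ℝ × ℝ,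
      fderiv ℝ V₁ p (f p) = -kρ * Real.cos p.2.2 ^ 2 * p.1 ^ 2 - kα * p.2.2 ^ 2 ∧
      fderiv ℝ V₁ p (f p) ≤ 0 :=
  weak_Lyapunov_derivative_general kρ kα lam hkρ hkα f hf V₁ hV₁
end

section
/- Let k_ρ, k_α, λ > 0 and let f : ℝ³ → ℝ³ be the nominal closed-loop kinematics vector field f(ρ, φ, α) = (−k_ρ cos²(α) ρ, −k_ρ sinc(2α) α, −k_α α + λ k_ρ sinc(2α) φ). Then the origin is globally asymptotically stable for ẋ = f(x): (stability) for every ε > 0 there exists δ > 0 such that every differentiable χ : [0, ∞) → ℝ³ with χ'(t) = f(χ(t)) for all t ≥ 0 and ‖χ(0)‖ < δ satisfies ‖χ(t)‖ < ε for all t ≥ 0; and (global attractivity) every such solution satisfies χ(t) → 0 as t → ∞. -/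
open Real Filter

/-!
`V = λ φ² + α²` is a Lyapunov function, `V' = -2 kα α²`, and `ρ²` is nonincreasing; together
they give stability. Along a solution `α'` is bounded, so a Barbalat-type argument gives `α → 0`.
Then `λ φ² → lim V`, so `|φ|` converges to some `c`; if `c > 0`, `φ` eventually has a fixed sign
and `α' → ±λ kρ c ≠ 0`, which is impossible while `α → 0`. Finally `cos² α → 1`, so `ρ` decays
exponentially.
-/

open Topology Set

theorem sinc_eq_real_sinc : _root_.sinc = Real.sinc := rfl

theorem Convex.antitoneOn_of_hasDerivAt_nonpos {D : Set ℝ} (hD : Convex ℝ D) {f f' : ℝ → ℝ}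
    (hf : ∀ x ∈ D, HasDerivAt f (f' x) x) (hf' : ∀ x ∈ D, f' x ≤ 0) : AntitoneOn f D :=
  antitoneOn_of_hasDerivWithinAt_nonpos hD
    (fun x hx => (hf x hx).continuousAt.continuousWithinAt)
    (fun x hx => (hf x (interior_subset hx)).hasDerivWithinAt)
    (fun x hx => hf' x (interior_subset hx))

theorem Convex.monotoneOn_of_hasDerivAt_nonneg {D : Set ℝ} (hD : Convex ℝ D) {f f' : ℝ → ℝ}
    (hf : ∀ x ∈ D, HasDerivAt f (f' x) x) (hf' : ∀ x ∈ D, 0 ≤ f' x) : MonotoneOn f D :=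
  monotoneOn_of_hasDerivWithinAt_nonneg hD
    (fun x hx => (hf x hx).continuousAt.continuousWithinAt)
    (fun x hx => (hf x (interior_subset hx)).hasDerivWithinAt)
    (fun x hx => hf' x (interior_subset hx))

theorem tendsto_abs_of_tendsto_sq {f : ℝ → ℝ} {l : Filter ℝ} {b : ℝ}
    (h : Tendsto (fun t => f t ^ 2) l (𝓝 b)) : Tendsto (fun t => |f t|) l (𝓝 √b) := by
  simpa only [Function.comp_def, sqrt_sq_eq_abs] using (continuous_sqrt.tendsto b).comp h

theorem exists_tendsto_of_antitoneOn_Ici {V : ℝ → ℝ} {T m : ℝ} (hV : AntitoneOn V (Ici T))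
    (hm : ∀ t ≥ T, m ≤ V t) : ∃ L, Tendsto V atTop (𝓝 L) := by
  have hanti : Antitone fun t => V (max t T) := fun s t hst =>
    hV (le_max_right s T) (le_max_right t T) (max_le_max hst le_rfl)
  have hbdd : BddBelow (range fun t => V (max t T)) := ⟨m, by
    rintro _ ⟨t, rfl⟩
    exact hm _ (le_max_right t T)⟩
  refine ⟨_, (tendsto_atTop_ciInf hanti hbdd).congr' ?_⟩
  filter_upwards [eventually_ge_atTop T] with t ht
  rw [max_eq_left ht]

theorem tendsto_atTop_of_tendsto_deriv_pos {a a' : ℝ → ℝ} {ℓ : ℝ}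
    (hd : ∀ᶠ t in atTop, HasDerivAt a (a' t) t) (ha' : Tendsto a' atTop (𝓝 ℓ)) (hℓ : 0 < ℓ) :
    Tendsto a atTop atTop := by
  obtain ⟨T, hT⟩ :=
    (hd.and (ha'.eventually (lt_mem_nhds (half_lt_self hℓ)))).exists_forall_of_atTop
  have hmono : MonotoneOn (fun t => a t - ℓ / 2 * t) (Ici T) :=
    (convex_Ici T).monotoneOn_of_hasDerivAt_nonneg
      (fun t ht => ((hT t ht).1.sub ((hasDerivAt_id t).const_mul (ℓ / 2))))
      (fun t ht => by linarith [(hT t ht).2])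
  have hlin : Tendsto (fun t => a T - ℓ / 2 * T + ℓ / 2 * t) atTop atTop :=
    tendsto_atTop_add_const_left _ _ (tendsto_id.const_mul_atTop (half_pos hℓ))
  refine tendsto_atTop_mono' _ ?_ hlin
  filter_upwards [eventually_ge_atTop T] with t ht
  have := hmono self_mem_Ici ht ht
  linarith

theorem eq_zero_of_tendsto_of_tendsto_deriv {a a' : ℝ → ℝ} {b ℓ : ℝ}
    (hd : ∀ᶠ t in atTop, HasDerivAt a (a' t) t) (ha : Tendsto a atTop (𝓝 b))
    (ha' : Tendsto a' atTop (𝓝 ℓ)) : ℓ = 0 := by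
  rcases lt_trichotomy ℓ 0 with hℓ | hℓ | hℓ
  · have hd' : ∀ᶠ t in atTop, HasDerivAt (-a) (-a' t) t := hd.mono fun t h => h.neg
    exact absurd ha.neg
      (not_tendsto_nhds_of_tendsto_atTop (tendsto_atTop_of_tendsto_deriv_pos hd' ha'.neg
        (neg_pos.2 hℓ)) _)
  · exact hℓ
  · exact absurd ha
      (not_tendsto_nhds_of_tendsto_atTop (tendsto_atTop_of_tendsto_deriv_pos hd ha' hℓ) _)

theorem tendsto_zero_of_hasDerivAt_neg_mul_self {r k : ℝ → ℝ} {κ : ℝ} (hκ : 0 < κ)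
    (h : ∀ᶠ t in atTop, HasDerivAt r (-k t * r t) t ∧ κ ≤ k t) : Tendsto r atTop (𝓝 0) := by
  obtain ⟨T, hT⟩ := h.exists_forall_of_atTop
  have hanti : AntitoneOn (fun t => r t ^ 2 * exp (2 * κ * t)) (Ici T) :=
    (convex_Ici T).antitoneOn_of_hasDerivAt_nonpos
      (fun t ht => ((hT t ht).1.pow 2).mul ((hasDerivAt_id t).const_mul (2 * κ)).exp)
      (fun t ht => by
        have hk := sub_nonneg.2 (hT t ht).2
        simp only [Pi.pow_apply, id, Nat.cast_ofNat, Nat.add_one_sub_one, pow_one, mul_one]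
        nlinarith [mul_nonneg (mul_nonneg (sq_nonneg (r t)) (exp_pos (2 * κ * t)).le) hk])
  have hbound : ∀ t ≥ T, r t ^ 2 ≤ r T ^ 2 * exp (2 * κ * T) * exp (-(2 * κ * t)) := by
    intro t ht
    rw [exp_neg, ← div_eq_mul_inv, le_div_iff₀ (exp_pos _)]
    exact hanti self_mem_Ici ht ht
  have hdecay :
      Tendsto (fun t => r T ^ 2 * exp (2 * κ * T) * exp (-(2 * κ * t))) atTop (𝓝 0) := by
    simpa using (tendsto_exp_neg_atTop_nhds_zero.comp (tendsto_id.const_mul_atTop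
      (by positivity : 0 < 2 * κ))).const_mul (r T ^ 2 * exp (2 * κ * T))
  have hsq : Tendsto (fun t => r t ^ 2) atTop (𝓝 0) :=
    tendsto_of_tendsto_of_tendsto_of_le_of_le' tendsto_const_nhds hdecay
      (Eventually.of_forall fun t => sq_nonneg (r t))
      (eventually_ge_atTop T |>.mono hbound)
  rw [tendsto_zero_iff_abs_tendsto_zero]
  simpa [Function.comp_def] using tendsto_abs_of_tendsto_sq hsq

theorem tendsto_zero_of_hasDerivAt_neg_mul_sq {V a a' : ℝ → ℝ} {c M : ℝ} (hc : 0 < c)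
    (hV : ∀ t ≥ 0, HasDerivAt V (-c * a t ^ 2) t) (hV0 : ∀ t ≥ 0, 0 ≤ V t)
    (ha : ∀ t ≥ 0, HasDerivAt a (a' t) t) (ha' : ∀ t ≥ 0, |a' t| ≤ M) :
    Tendsto a atTop (𝓝 0) := by
  have hanti : AntitoneOn V (Ici 0) :=
    (convex_Ici 0).antitoneOn_of_hasDerivAt_nonpos hV
      (fun t _ => by nlinarith [sq_nonneg (a t)])
  obtain ⟨L, hL⟩ := exists_tendsto_of_antitoneOn_Ici hanti hV0
  have hM : 0 ≤ M := (abs_nonneg _).trans (ha' 0 le_rfl)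
  rw [Metric.tendsto_atTop]
  intro ε hε
  set h := ε / (2 * (M + 1)) with h_def
  have hh : 0 < h := by positivity
  have hMh : M * h ≤ ε / 2 := by
    rw [h_def, mul_div_assoc', div_le_div_iff₀ (by positivity) two_pos]
    nlinarith
  have hdrop : Tendsto (fun s => V s - V (s + h)) atTop (𝓝 0) := by
    simpa using hL.sub (hL.comp (tendsto_atTop_add_const_right _ h tendsto_id))
  obtain ⟨T, hT⟩ := ((hdrop.eventually
    (gt_mem_nhds (by positivity : 0 < c * (ε / 2) ^ 2 * h))).and
      (eventually_ge_atTop 0)).exists_forall_of_atTop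
  refine ⟨T, fun s hs => ?_⟩
  obtain ⟨hsmall, hs0 : 0 ≤ s⟩ := hT s hs
  rw [Real.dist_eq, sub_zero]
  by_contra! hbig
  -- `a` is `M`-Lipschitz, so `|a| ≥ ε / 2` on `[s, s + h]`, where `V` then drops by `c (ε/2)² h`
  have hnear : ∀ u ∈ Icc s (s + h), ε / 2 ≤ |a u| := by
    intro u hu
    have hlip : |a u - a s| ≤ M * |u - s| :=
      (convex_Icc s (s + h)).norm_image_sub_le_of_norm_hasDerivWithin_le
        (fun x hx => (ha x (hs0.trans hx.1)).hasDerivWithinAt)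
        (fun x hx => ha' x (hs0.trans hx.1)) (left_mem_Icc.2 (by linarith)) hu
    rw [abs_of_nonneg (sub_nonneg.2 hu.1)] at hlip
    have := abs_sub_abs_le_abs_sub (a s) (a u)
    rw [abs_sub_comm] at this
    nlinarith [hu.2]
  have hdecr : AntitoneOn (fun u => V u + c * (ε / 2) ^ 2 * u) (Icc s (s + h)) :=
    (convex_Icc s (s + h)).antitoneOn_of_hasDerivAt_nonpos
      (fun u hu => (hV u (hs0.trans hu.1)).add ((hasDerivAt_id u).const_mul _))
      (fun u hu => by
        have := pow_le_pow_left₀ (by positivity) (hnear u hu) 2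
        rw [sq_abs] at this
        nlinarith)
  have := hdecr (left_mem_Icc.2 (by linarith)) (right_mem_Icc.2 (by linarith)) (by linarith)
  simp only at this
  linarith

theorem tendsto_or_tendsto_neg_of_tendsto_abs {f : ℝ → ℝ} {c : ℝ} (hc : 0 < c)
    (hf : ∀ᶠ t in atTop, ContinuousAt f t) (h : Tendsto (fun t => |f t|) atTop (𝓝 c)) :
    Tendsto f atTop (𝓝 c) ∨ Tendsto f atTop (𝓝 (-c)) := by
  obtain ⟨T, hT⟩ := (hf.and (h.eventually (lt_mem_nhds hc))).exists_forall_of_atTop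
  have hcont : ContinuousOn f (Ici T) := fun t ht => (hT t ht).1.continuousWithinAt
  rcases isPreconnected_Ici.eq_or_eq_neg_of_sq_eq hcont (continuous_abs.comp_continuousOn hcont)
      (fun t _ => by simp [sq_abs]) (fun ht => (hT _ ht).2.ne') with hpos | hneg
  · exact .inl (h.congr' (eventually_ge_atTop T |>.mono fun t ht => (hpos ht).symm))
  · exact .inr (h.neg.congr' (eventually_ge_atTop T |>.mono fun t ht => (hneg ht).symm))

structure IsNominalSolution (kρ kα lam : ℝ) (ρ φ α : ℝ → ℝ) : Prop where
  hasDerivAt_rho : ∀ t ≥ 0, HasDerivAt ρ (-kρ * cos (α t) ^ 2 * ρ t) t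
  hasDerivAt_phi : ∀ t ≥ 0, HasDerivAt φ (-kρ * Real.sinc (2 * α t) * α t) t
  hasDerivAt_alpha : ∀ t ≥ 0,
    HasDerivAt α (-kα * α t + lam * kρ * Real.sinc (2 * α t) * φ t) t

namespace IsNominalSolution

variable {kρ kα lam : ℝ} {ρ φ α : ℝ → ℝ}

theorem hasDerivAt_lyapunov (hs : IsNominalSolution kρ kα lam ρ φ α) :
    ∀ t ≥ 0, HasDerivAt (fun t => lam * φ t ^ 2 + α t ^ 2) (-(2 * kα) * α t ^ 2) t := by
  intro t ht
  refine ((((hs.hasDerivAt_phi t ht).pow 2).const_mul lam).add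
    ((hs.hasDerivAt_alpha t ht).pow 2)).congr_deriv ?_
  push_cast
  ring

theorem sq_rho_antitoneOn (hs : IsNominalSolution kρ kα lam ρ φ α)
    (hkρ : 0 ≤ kρ) : AntitoneOn (fun t => ρ t ^ 2) (Ici 0) :=
  (convex_Ici 0).antitoneOn_of_hasDerivAt_nonpos (fun t ht => (hs.hasDerivAt_rho t ht).pow 2)
    (fun t _ => by
      simp only [Nat.cast_ofNat, Nat.add_one_sub_one, pow_one]
      nlinarith [mul_nonneg hkρ (sq_nonneg (cos (α t) * ρ t))])

theorem lyapunov_antitoneOn (hs : IsNominalSolution kρ kα lam ρ φ α)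
    (hkα : 0 ≤ kα) :
    AntitoneOn (fun t => lam * φ t ^ 2 + α t ^ 2) (Ici 0) :=
  (convex_Ici 0).antitoneOn_of_hasDerivAt_nonpos hs.hasDerivAt_lyapunov
    (fun t _ => by nlinarith [mul_nonneg hkα (sq_nonneg (α t))])

theorem sq_add_sq_add_sq_le (hs : IsNominalSolution kρ kα lam ρ φ α)
    (hkρ : 0 ≤ kρ) (hkα : 0 ≤ kα) (hlam : 0 < lam) {t : ℝ} (ht : 0 ≤ t) :
    ρ t ^ 2 + φ t ^ 2 + α t ^ 2 ≤ (1 + lam) * (1 + lam⁻¹) * (ρ 0 ^ 2 + φ 0 ^ 2 + α 0 ^ 2) := by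
  have hρ : ρ t ^ 2 ≤ ρ 0 ^ 2 := hs.sq_rho_antitoneOn hkρ self_mem_Ici ht ht
  have hV : lam * φ t ^ 2 + α t ^ 2 ≤ lam * φ 0 ^ 2 + α 0 ^ 2 :=
    hs.lyapunov_antitoneOn hkα self_mem_Ici ht ht
  have hinv : lam * lam⁻¹ = 1 := mul_inv_cancel₀ hlam.ne'
  have hinv0 : 0 < lam⁻¹ := inv_pos.2 hlam
  calc ρ t ^ 2 + φ t ^ 2 + α t ^ 2
      ≤ ρ t ^ 2 + (1 + lam⁻¹) * (lam * φ t ^ 2 + α t ^ 2) := by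
        nlinarith [sq_nonneg (φ t), mul_nonneg hinv0.le (sq_nonneg (α t)),
          mul_nonneg hlam.le (sq_nonneg (φ t))]
    _ ≤ ρ 0 ^ 2 + (1 + lam⁻¹) * (lam * φ 0 ^ 2 + α 0 ^ 2) := by gcongr
    _ ≤ (1 + lam) * (1 + lam⁻¹) * (ρ 0 ^ 2 + φ 0 ^ 2 + α 0 ^ 2) := by
        nlinarith [sq_nonneg (ρ 0), sq_nonneg (φ 0), sq_nonneg (α 0),
          mul_nonneg hinv0.le (sq_nonneg (ρ 0)), mul_nonneg hlam.le (sq_nonneg (ρ 0)),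
          mul_nonneg hinv0.le (sq_nonneg (φ 0)), mul_nonneg hlam.le (sq_nonneg (α 0))]

theorem exists_abs_deriv_alpha_le (hs : IsNominalSolution kρ kα lam ρ φ α)
    (hkρ : 0 ≤ kρ) (hkα : 0 ≤ kα) (hlam : 0 < lam) :
    ∃ M, ∀ t ≥ 0, |-kα * α t + lam * kρ * Real.sinc (2 * α t) * φ t| ≤ M := by
  set V₀ := lam * φ 0 ^ 2 + α 0 ^ 2
  refine ⟨kα * √V₀ + lam * kρ * √(V₀ / lam), fun t ht => ?_⟩
  have hV : lam * φ t ^ 2 + α t ^ 2 ≤ V₀ := hs.lyapunov_antitoneOn hkα self_mem_Ici ht ht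
  have hα : |α t| ≤ √V₀ := abs_le_sqrt (by nlinarith [sq_nonneg (φ t)])
  have hφ : |φ t| ≤ √(V₀ / lam) :=
    abs_le_sqrt (by rw [le_div_iff₀ hlam]; nlinarith [sq_nonneg (α t)])
  have hsinc : |Real.sinc (2 * α t) * φ t| ≤ √(V₀ / lam) := by
    rw [abs_mul]
    nlinarith [abs_sinc_le_one (2 * α t), abs_nonneg (Real.sinc (2 * α t)), abs_nonneg (φ t)]
  calc |-kα * α t + lam * kρ * Real.sinc (2 * α t) * φ t|
      ≤ kα * |α t| + lam * kρ * |Real.sinc (2 * α t) * φ t| := by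
        have h₁ : |-kα * α t| = kα * |α t| := by rw [abs_mul, abs_neg, abs_of_nonneg hkα]
        have h₂ : |lam * kρ * Real.sinc (2 * α t) * φ t|
            = lam * kρ * |Real.sinc (2 * α t) * φ t| := by
          rw [mul_assoc, abs_mul, abs_of_nonneg (mul_nonneg hlam.le hkρ)]
        exact (abs_add_le _ _).trans_eq (by rw [h₁, h₂])
    _ ≤ kα * √V₀ + lam * kρ * √(V₀ / lam) := by gcongr

theorem tendsto_alpha (hs : IsNominalSolution kρ kα lam ρ φ α)
    (hkρ : 0 ≤ kρ) (hkα : 0 < kα) (hlam : 0 < lam) :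
    Tendsto α atTop (𝓝 0) := by
  obtain ⟨M, hM⟩ := hs.exists_abs_deriv_alpha_le hkρ hkα.le hlam
  exact tendsto_zero_of_hasDerivAt_neg_mul_sq (by positivity) hs.hasDerivAt_lyapunov
    (fun t _ => by positivity) hs.hasDerivAt_alpha hM

theorem tendsto_phi (hs : IsNominalSolution kρ kα lam ρ φ α)
    (hkρ : 0 < kρ) (hkα : 0 < kα) (hlam : 0 < lam) :
    Tendsto φ atTop (𝓝 0) := by
  have hα := hs.tendsto_alpha hkρ.le hkα hlam
  obtain ⟨L, hL⟩ := exists_tendsto_of_antitoneOn_Ici (hs.lyapunov_antitoneOn hkα.le)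
    (fun t _ => by positivity : ∀ t ≥ 0, 0 ≤ lam * φ t ^ 2 + α t ^ 2)
  have hφsq : Tendsto (fun t => φ t ^ 2) atTop (𝓝 (L / lam)) := by
    refine (by simpa using (hL.sub (hα.pow 2)).div_const lam :
      Tendsto (fun t => (lam * φ t ^ 2 + α t ^ 2 - α t ^ 2) / lam) atTop _).congr fun t => ?_
    field_simp
    ring
  have hφabs := tendsto_abs_of_tendsto_sq hφsq
  suffices hc : √(L / lam) = 0 by
    rw [hc] at hφabs
    rw [tendsto_zero_iff_abs_tendsto_zero]
    exact hφabs
  by_contra hne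
  have hc : 0 < √(L / lam) := (sqrt_nonneg _).lt_of_ne' hne
  have hsinc : Tendsto (fun t => Real.sinc (2 * α t)) atTop (𝓝 1) := by
    simpa [Real.sinc_zero, Function.comp_def] using
      (continuous_sinc.tendsto 0).comp (by simpa using hα.const_mul 2)
  have hlim_zero : ∀ {b}, Tendsto φ atTop (𝓝 b) → lam * kρ * b = 0 := fun hb =>
    eq_zero_of_tendsto_of_tendsto_deriv
      ((eventually_ge_atTop 0).mono hs.hasDerivAt_alpha) hα
      (by simpa using (hα.const_mul (-kα)).add ((hsinc.const_mul (lam * kρ)).mul hb))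
  have hcont : ∀ᶠ t in atTop, ContinuousAt φ t :=
    (eventually_ge_atTop 0).mono fun t ht => (hs.hasDerivAt_phi t ht).continuousAt
  rcases tendsto_or_tendsto_neg_of_tendsto_abs hc hcont hφabs with h | h
  · simpa [hlam.ne', hkρ.ne', hc.ne'] using hlim_zero h
  · simpa [hlam.ne', hkρ.ne', hc.ne'] using hlim_zero h

theorem tendsto_rho (hs : IsNominalSolution kρ kα lam ρ φ α)
    (hkρ : 0 < kρ) (hkα : 0 < kα) (hlam : 0 < lam) :
    Tendsto ρ atTop (𝓝 0) := by
  have hcos : Tendsto (fun t => cos (α t) ^ 2) atTop (𝓝 1) := by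
    simpa using ((continuous_cos.tendsto 0).comp (hs.tendsto_alpha hkρ.le hkα hlam)).pow 2
  refine tendsto_zero_of_hasDerivAt_neg_mul_self (k := fun t => kρ * cos (α t) ^ 2)
    (half_pos hkρ) ?_
  filter_upwards [eventually_ge_atTop 0, hcos.eventually (lt_mem_nhds one_half_lt_one)]
    with t ht hct
  refine ⟨by simpa only [neg_mul, mul_assoc] using hs.hasDerivAt_rho t ht, ?_⟩
  nlinarith

end IsNominalSolution

theorem isNominalSolution_of_hasDerivAt {kρ kα lam : ℝ}
    {f : EuclideanSpace ℝ (Fin 3) → EuclideanSpace ℝ (Fin 3)}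
    (hf : ∀ p : EuclideanSpace ℝ (Fin 3),
      f p = ![-kρ * Real.cos (p 2) ^ 2 * p 0,
              -kρ * _root_.sinc (2 * p 2) * p 2,
              -kα * p 2 + lam * kρ * _root_.sinc (2 * p 2) * p 1])
    {χ : ℝ → EuclideanSpace ℝ (Fin 3)} (hχ : ∀ t : ℝ, 0 ≤ t → HasDerivAt χ (f (χ t)) t) :
    IsNominalSolution kρ kα lam (fun t => χ t 0) (fun t => χ t 1) (fun t => χ t 2) := by
  have hcoord (i : Fin 3) (t : ℝ) (ht : 0 ≤ t) : HasDerivAt (fun t => χ t i) (f (χ t) i) t :=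
    (EuclideanSpace.proj i : EuclideanSpace ℝ (Fin 3) →L[ℝ] ℝ).hasFDerivAt.comp_hasDerivAt t
      (hχ t ht)
  refine ⟨fun t ht => ?_, fun t ht => ?_, fun t ht => ?_⟩ <;>
    exact (hcoord _ t ht).congr_deriv (by rw [hf, sinc_eq_real_sinc]; rfl)

theorem EuclideanSpace.norm_sq_eq_fin_three (x : EuclideanSpace ℝ (Fin 3)) :
    ‖x‖ ^ 2 = x 0 ^ 2 + x 1 ^ 2 + x 2 ^ 2 := by
  simp [EuclideanSpace.norm_sq_eq, Fin.sum_univ_three]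

/-- The origin is globally asymptotically stable for the nominal closed-loop
kinematics `ρ̇ = -k_ρ cos²(α) ρ`, `φ̇ = -k_ρ sinc(2α) α`,
`α̇ = -k_α α + λ k_ρ sinc(2α) φ`: it is Lyapunov stable and every solution
on `[0, ∞)` converges to the origin. Coordinates: `p = (ρ, φ, α) = (p 0, p 1, p 2)`. -/
theorem nominal_kinematics_GAS
    (kρ kα lam : ℝ) (hkρ : 0 < kρ) (hkα : 0 < kα) (hlam : 0 < lam)
    (f : EuclideanSpace ℝ (Fin 3) → EuclideanSpace ℝ (Fin 3))
    (hf : ∀ p : EuclideanSpace ℝ (Fin 3),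
      f p = ![-kρ * Real.cos (p 2) ^ 2 * p 0,
              -kρ * _root_.sinc (2 * p 2) * p 2,
              -kα * p 2 + lam * kρ * _root_.sinc (2 * p 2) * p 1]) :
    (∀ ε > (0 : ℝ), ∃ δ > (0 : ℝ), ∀ χ : ℝ → EuclideanSpace ℝ (Fin 3),
      (∀ t : ℝ, 0 ≤ t → HasDerivAt χ (f (χ t)) t) → ‖χ 0‖ < δ →
        ∀ t : ℝ, 0 ≤ t → ‖χ t‖ < ε) ∧
    (∀ χ : ℝ → EuclideanSpace ℝ (Fin 3),
      (∀ t : ℝ, 0 ≤ t → HasDerivAt χ (f (χ t)) t) →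
        Tendsto χ atTop (nhds 0)) := by
  set C := (1 + lam) * (1 + lam⁻¹)
  have hC : 0 < C := by positivity
  constructor
  · intro ε hε
    refine ⟨ε / √C, by positivity, fun χ hχ h0 t ht => ?_⟩
    have hsq :=
      (isNominalSolution_of_hasDerivAt hf hχ).sq_add_sq_add_sq_le hkρ.le hkα.le hlam ht
    simp only [← EuclideanSpace.norm_sq_eq_fin_three] at hsq
    refine lt_of_pow_lt_pow_left₀ 2 hε.le (hsq.trans_lt ?_)
    calc C * ‖χ 0‖ ^ 2 < C * (ε / √C) ^ 2 := by gcongr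
      _ = ε ^ 2 := by rw [div_pow, sq_sqrt hC.le]; field_simp
  · intro χ hχ
    have hs := isNominalSolution_of_hasDerivAt hf hχ
    have hsum := (((hs.tendsto_rho hkρ hkα hlam).pow 2).add
      ((hs.tendsto_phi hkρ hkα hlam).pow 2)).add ((hs.tendsto_alpha hkρ.le hkα hlam).pow 2)
    simp only [← EuclideanSpace.norm_sq_eq_fin_three] at hsum
    rw [tendsto_zero_iff_norm_tendsto_zero]
    simpa using tendsto_abs_of_tendsto_sq hsum
end

section
/- Let k_ρ, k_α, λ > 0, A = [[−k_α, λ k_ρ], [−k_ρ, 0]], and let P be a symmetric positive definite 2×2 real matrix with AᵀP + PA = −I. Let r > 0 and let c > 0 be a constant such that ‖K(α, φ)‖ ≤ c‖(α, φ)‖|α| whenever ‖(α, φ)‖ ≤ r, where K(α, φ) := (−λ k_ρ (1 − sinc(2α)) φ, k_ρ (1 − sinc(2α)) α). Then for all ξ = (α, φ) with ‖ξ‖ ≤ r, the derivative of V₂(ξ) := ξᵀPξ along ξ̇ = Aξ + K(α, φ) satisfies 2 ξᵀP(Aξ + K(α, φ)) ≤ −½‖ξ‖² + 2 c² r² λ_M(P)²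 α², where λ_M(P) denotes the largest eigenvalue of P. -/
/-!
Because `P` is symmetric, `2 ξᵀPAξ = ξᵀ(AᵀP + PA)ξ = -‖ξ‖²`, so only the perturbation term
`2 ξᵀPK` has to be controlled. Cauchy–Schwarz for the positive semidefinite form of `P`
together with the Rayleigh bound `ξᵀPξ ≤ λ_M(P) ‖ξ‖²` gives `|ξᵀPK| ≤ λ_M(P) ‖ξ‖ ‖K‖
≤ c λ_M(P) ‖ξ‖² |α|`, and AM–GM absorbs half of `‖ξ‖²`, leaving `2 c² λ_M(P)² ‖ξ‖² α²`
with `‖ξ‖ ≤ r`.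
-/

open Real Matrix

namespace Matrix

variable {n : Type*} [Fintype n]

theorem IsSymm.dotProduct_mulVec_comm {R : Type*} [CommSemiring R] {P : Matrix n n R}
    (hP : P.IsSymm) (x y : n → R) : x ⬝ᵥ P *ᵥ y = y ⬝ᵥ P *ᵥ x := by
  rw [dotProduct_mulVec, ← mulVec_transpose, hP.eq, dotProduct_comm]

theorem IsSymm.two_dotProduct_mulVec_mulVec {R : Type*} [CommRing R] {P : Matrix n n R}
    (hP : P.IsSymm) (A : Matrix n n R) (x : n → R) :
    2 * (x ⬝ᵥ P *ᵥ (A *ᵥ x)) = x ⬝ᵥ (Aᵀ * P + P * A) *ᵥ x := by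
  rw [add_mulVec, dotProduct_add, ← mulVec_mulVec, ← mulVec_mulVec, dotProduct_mulVec x Aᵀ,
    vecMul_transpose, hP.dotProduct_mulVec_comm (A *ᵥ x), two_mul]

theorem PosSemidef.sq_dotProduct_mulVec_le {P : Matrix n n ℝ} (hP : P.PosSemidef) (x y : n → ℝ) :
    (x ⬝ᵥ P *ᵥ y) ^ 2 ≤ (x ⬝ᵥ P *ᵥ x) * (y ⬝ᵥ P *ᵥ y) := by
  have hsymm : P.IsSymm := hP.isHermitian
  -- the quadratic `t ↦ (t x + y)ᵀ P (t x + y)` is nonnegative, so its discriminant is not positive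
  have hquad : ∀ t : ℝ,
      0 ≤ (x ⬝ᵥ P *ᵥ x) * (t * t) + 2 * (x ⬝ᵥ P *ᵥ y) * t + y ⬝ᵥ P *ᵥ y := by
    intro t
    have := hP.dotProduct_mulVec_nonneg (t • x + y)
    simp only [star_trivial, mulVec_add, mulVec_smul, dotProduct_add, add_dotProduct,
      dotProduct_smul, smul_dotProduct, smul_eq_mul, hsymm.dotProduct_mulVec_comm y x] at this
    linarith
  have := discrim_le_zero hquad
  rw [discrim] at this
  nlinarith

open scoped MatrixOrder in
theorem IsHermitian.dotProduct_mulVec_self_le [DecidableEq n] {P : Matrix n n ℝ}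
    (hP : P.IsHermitian) {l : ℝ} (hl : l ∈ upperBounds (spectrum ℝ P)) (x : n → ℝ) :
    x ⬝ᵥ P *ᵥ x ≤ l * (x ⬝ᵥ x) := by
  have := (le_algebraMap_of_spectrum_le hl hP.isSelfAdjoint).dotProduct_mulVec_nonneg x
  simp only [star_trivial, sub_mulVec, dotProduct_sub, algebraMap_eq_diagonal,
    Pi.algebraMap_def, Algebra.algebraMap_self_apply, diagonal_const_mulVec, dotProduct_smul,
    smul_eq_mul] at this
  linarith

theorem PosSemidef.sq_dotProduct_mulVec_le_of_mem_upperBounds [DecidableEq n]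
    {P : Matrix n n ℝ} (hP : P.PosSemidef) {l : ℝ} (hl : l ∈ upperBounds (spectrum ℝ P))
    (x y : n → ℝ) : (x ⬝ᵥ P *ᵥ y) ^ 2 ≤ l ^ 2 * (x ⬝ᵥ x) * (y ⬝ᵥ y) := by
  have hx := hP.isHermitian.dotProduct_mulVec_self_le hl x
  have hy := hP.isHermitian.dotProduct_mulVec_self_le hl y
  have hx0 := hP.dotProduct_mulVec_nonneg x
  have hy0 := hP.dotProduct_mulVec_nonneg y
  simp only [star_trivial] at hx0 hy0
  calc (x ⬝ᵥ P *ᵥ y) ^ 2 ≤ (x ⬝ᵥ P *ᵥ x) * (y ⬝ᵥ P *ᵥ y) := hP.sq_dotProduct_mulVec_le x y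
    _ ≤ (l * (x ⬝ᵥ x)) * (l * (y ⬝ᵥ y)) := mul_le_mul hx hy hy0 (hx0.trans hx)
    _ = l ^ 2 * (x ⬝ᵥ x) * (y ⬝ᵥ y) := by ring

end Matrix

theorem two_mul_le_half_sq_add_of_sq_le {s l n k c r a : ℝ} (hn : 0 ≤ n) (hk : 0 ≤ k)
    (hs : s ^ 2 ≤ l ^ 2 * n ^ 2 * k ^ 2) (hkn : k ≤ c * n * |a|) (hnr : n ≤ r) :
    2 * s ≤ 1 / 2 * n ^ 2 + 2 * c ^ 2 * r ^ 2 * l ^ 2 * a ^ 2 := by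
  have hs_le : s ≤ |l| * n * k :=
    (abs_le_of_sq_le_sq' (by rwa [mul_pow, mul_pow, sq_abs]) (by positivity)).2
  calc 2 * s ≤ 2 * (|l| * n * (c * n * |a|)) := by gcongr; exact hs_le.trans (by gcongr)
    _ ≤ 1 / 2 * n ^ 2 + 2 * (c * n * (|l| * |a|)) ^ 2 := by
      nlinarith [sq_nonneg (n - 2 * c * n * (|l| * |a|))]
    _ = 1 / 2 * n ^ 2 + 2 * c ^ 2 * n ^ 2 * l ^ 2 * a ^ 2 := by
      rw [mul_pow, mul_pow, mul_pow, sq_abs, sq_abs]; ring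
    _ ≤ 1 / 2 * n ^ 2 + 2 * c ^ 2 * r ^ 2 * l ^ 2 * a ^ 2 := by gcongr

theorem V2_derivative_bound_general
    (A : Matrix (Fin 2) (Fin 2) ℝ)
    (P : Matrix (Fin 2) (Fin 2) ℝ)
    (hPpos : P.PosDef)
    (hLyap : Aᵀ * P + P * A = -(1 : Matrix (Fin 2) (Fin 2) ℝ))
    (lM : ℝ) (hlM : IsGreatest (spectrum ℝ P) lM)
    (K : ℝ → ℝ → ℝ × ℝ)
    (r c : ℝ)
    (hKbound : ∀ α φ : ℝ, Real.sqrt (α ^ 2 + φ ^ 2) ≤ r →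
      Real.sqrt ((K α φ).1 ^ 2 + (K α φ).2 ^ 2)
        ≤ c * Real.sqrt (α ^ 2 + φ ^ 2) * |α|) :
    ∀ α φ : ℝ, Real.sqrt (α ^ 2 + φ ^ 2) ≤ r →
      2 * (![α, φ] ⬝ᵥ P.mulVec (A.mulVec ![α, φ] + ![(K α φ).1, (K α φ).2]))
        ≤ -(1 / 2) * (α ^ 2 + φ ^ 2) + 2 * c ^ 2 * r ^ 2 * lM ^ 2 * α ^ 2 := by
  intro α φ hball
  have hsq (u v : ℝ) : ![u, v] ⬝ᵥ ![u, v] = u ^ 2 + v ^ 2 := by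
    simp [dotProduct, Fin.sum_univ_two, sq]
  have hCS := hPpos.posSemidef.sq_dotProduct_mulVec_le_of_mem_upperBounds hlM.2
    ![α, φ] ![(K α φ).1, (K α φ).2]
  rw [hsq, hsq, ← sq_sqrt (add_nonneg (sq_nonneg α) (sq_nonneg φ)),
    ← sq_sqrt (add_nonneg (sq_nonneg (K α φ).1) (sq_nonneg (K α φ).2))] at hCS
  have hcross := two_mul_le_half_sq_add_of_sq_le (sqrt_nonneg _) (sqrt_nonneg _) hCS
    (hKbound α φ hball) hball
  rw [sq_sqrt (add_nonneg (sq_nonneg α) (sq_nonneg φ))] at hcross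
  have hsymm : P.IsSymm := hPpos.isHermitian
  rw [mulVec_add, dotProduct_add, mul_add, hsymm.two_dotProduct_mulVec_mulVec, hLyap,
    neg_mulVec, one_mulVec, dotProduct_neg, hsq]
  linarith

/-- Derivative bound for `V₂(ξ) = ξᵀPξ` along the output-injection form
`ξ̇ = Aξ + K(α, φ)` with `ξ = (α, φ)`: on the ball of radius `r`,
`2 ξᵀP(Aξ + K) ≤ -½‖ξ‖² + 2 c² r² λ_M(P)² α²`, where `λ_M(P)` is the largest
eigenvalue of `P` and `c` is the constant of the bound `‖K(α,φ)‖ ≤ c‖(α,φ)‖|α|`. -/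
theorem V2_derivative_bound
    (kρ kα lam : ℝ) (hkρ : 0 < kρ) (hkα : 0 < kα) (hlam : 0 < lam)
    (A : Matrix (Fin 2) (Fin 2) ℝ)
    (hA : A = Matrix.of ![![-kα, lam * kρ], ![-kρ, 0]])
    (P : Matrix (Fin 2) (Fin 2) ℝ)
    (hPsymm : P.IsSymm) (hPpos : P.PosDef)
    (hLyap : Aᵀ * P + P * A = -(1 : Matrix (Fin 2) (Fin 2) ℝ))
    (lM : ℝ) (hlM : IsGreatest (spectrum ℝ P) lM)
    (K : ℝ → ℝ → ℝ × ℝ)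
    (hK : ∀ α φ : ℝ,
      K α φ = (-lam * kρ * (1 - _root_.sinc (2 * α)) * φ, kρ * (1 - _root_.sinc (2 * α)) * α))
    (r c : ℝ) (hr : 0 < r) (hc : 0 < c)
    (hKbound : ∀ α φ : ℝ, Real.sqrt (α ^ 2 + φ ^ 2) ≤ r →
      Real.sqrt ((K α φ).1 ^ 2 + (K α φ).2 ^ 2)
        ≤ c * Real.sqrt (α ^ 2 + φ ^ 2) * |α|) :
    ∀ α φ : ℝ, Real.sqrt (α ^ 2 + φ ^ 2) ≤ r →
      2 * (![α, φ] ⬝ᵥ P.mulVec (A.mulVec ![α, φ] + ![(K α φ).1, (K α φ).2]))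
        ≤ -(1 / 2) * (α ^ 2 + φ ^ 2) + 2 * c ^ 2 * r ^ 2 * lM ^ 2 * α ^ 2 :=
  V2_derivative_bound_general A P hPpos hLyap lM hlM K r c hKbound
end

section
/- Let k_ρ, k_α, k_z, k_ω, λ > 0 and r > 0. Let V : ℝ³ → ℝ be a positive definite continuously differentiable function of (ρ, φ, α) of the form V = ν·½(ρ² + λφ² + α²) + (α, φ)ᵀP(α, φ) (P symmetric positive definite, ν > 0) satisfying ∇V · f ≤ −ν k_ρ cos²(α) ρ² − ½(α² + φ²) on B_r = {‖(ρ, φ, α)‖ ≤ r}, where f is the nominal closed-loop kinematics f(ρ, φ, α) = (−k_ρ cos²(α) ρ, −k_ρ sinc(2α) α, −k_α α + λ k_ρ sinc(2α) φ). Let F : ℝ⁵ → ℝ⁵ be the full closed-loop vector field F(ρ, φ, α, z, ω̃) = (−k_ρ cos²(α) ρ + ρ cos(α) z, −k_ρ sinc(2α) α + sin(α) z, −k_α α + λ k_ρ sinc(2α) φ − sin(α) z + ω̃, −k_z z, −k_ω ω̃). Then there exists μ̄ > 0 such that for every μ ∈ (0, μ̄], the function 𝒱_r(ρ, φ, α,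 z, ω̃) := μ ln(V(ρ, φ, α) + 1) + ½(z²/k_z + ω̃²/k_ω) is a strict Lyapunov function for F on B_r × ℝ²: 𝒱_r is positive definite and ∇𝒱_r(χ) · F(χ) < 0 for every nonzero χ = (ρ, φ, α, z, ω̃) with (ρ, φ, α) ∈ B_r. -/
open Real Matrix

/-!
Since `V` is quadratic, its derivative along the full field splits into the derivative along the
nominal field `f`, bounded by hypothesis, and a linear term in the perturbation driven by `z` and
`ω̃`. Young's inequality bounds that term by half of the nominal dissipation plus a multiple of
`z² + ω̃²`, whose coefficient involves `ρ²` and hence stays bounded on `B_r`. The logarithm scales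
the derivative of `V` by `μ / (V + 1) ≤ μ`, so for small `μ` this multiple is dominated by the
`-z² - ω̃²` contributed by the exponentially stable `(z, ω̃)`-subsystem.
-/

theorem Matrix.abs_dotProduct_mulVec_le {m n : Type*} [Fintype m] [Fintype n]
    (A : Matrix m n ℝ) (x : m → ℝ) (y : n → ℝ) :
    |x ⬝ᵥ A *ᵥ y| ≤ (∑ i, ∑ j, |A i j|) * (∑ i, |x i|) * (∑ j, |y j|) := by
  have hx : ∀ i, |x i| ≤ ∑ i, |x i| := fun i =>
    Finset.single_le_sum (f := fun i => |x i|) (fun _ _ => abs_nonneg _) (Finset.mem_univ i)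
  have hy : ∀ j, |y j| ≤ ∑ j, |y j| := fun j =>
    Finset.single_le_sum (f := fun j => |y j|) (fun _ _ => abs_nonneg _) (Finset.mem_univ j)
  calc |x ⬝ᵥ A *ᵥ y| = |∑ i, ∑ j, x i * A i j * y j| := by
        simp only [dotProduct, mulVec, Finset.mul_sum, mul_assoc]
    _ ≤ ∑ i, ∑ j, |x i * A i j * y j| :=
        (Finset.abs_sum_le_sum_abs _ _).trans
          (Finset.sum_le_sum fun i _ => Finset.abs_sum_le_sum_abs _ _)
    _ ≤ ∑ i, ∑ j, |A i j| * (∑ i, |x i|) * (∑ j, |y j|) := by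
        gcongr with i _ j _
        rw [abs_mul, abs_mul, mul_comm |x i|]
        gcongr
        exacts [hx i, hy j]
    _ = _ := by simp only [← Finset.sum_mul]

theorem fderiv_apply_eq_of_sq_expansion {E : Type*} [NormedAddCommGroup E] [NormedSpace ℝ E]
    {V : E → ℝ} {q v : E} {L c : ℝ} (hV : DifferentiableAt ℝ V q)
    (h : ∀ t : ℝ, V (q + t • v) = V q + t * L + t ^ 2 * c) : fderiv ℝ V q v = L := by
  have hline : HasDerivAt (fun t : ℝ => q + t • v) v 0 := by
    simpa using ((hasDerivAt_id (0:ℝ)).smul_const v).const_add q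
  have h1 : HasDerivAt (fun t : ℝ => V (q + t • v)) (fderiv ℝ V q v) 0 :=
    hV.hasFDerivAt.comp_hasDerivAt_of_eq 0 hline (by simp)
  have h2 : HasDerivAt (fun t : ℝ => V (q + t • v)) L 0 := by
    simp only [h]
    simpa using ((hasDerivAt_mul_const L).const_add (V q)).fun_add
      ((hasDerivAt_pow 2 (0 : ℝ)).mul_const c)
  exact h1.unique h2

def HasLyapunovForm (ν lam : ℝ) (P : Matrix (Fin 2) (Fin 2) ℝ) (V : ℝ × ℝ × ℝ → ℝ) : Prop :=
  ∀ q : ℝ × ℝ × ℝ, V q = ν * ((q.1 ^ 2 + lam * q.2.1 ^ 2 + q.2.2 ^ 2) / 2)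
    + ![q.2.2, q.2.1] ⬝ᵥ P.mulVec ![q.2.2, q.2.1]

def couplingGain (ν lam : ℝ) (P : Matrix (Fin 2) (Fin 2) ℝ) : ℝ :=
  ν * (lam + 1) + 2 * ∑ i, ∑ j, |P i j|

theorem couplingGain_pos {ν lam : ℝ} (hν : 0 < ν) (hlam : 0 < lam) (P : Matrix (Fin 2) (Fin 2) ℝ) :
    0 < couplingGain ν lam P := by
  unfold couplingGain
  positivity

section QuadraticForm

variable {ν lam : ℝ} {P : Matrix (Fin 2) (Fin 2) ℝ} {V : ℝ × ℝ × ℝ → ℝ}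

theorem fderiv_apply_of_form
    (hVform : HasLyapunovForm ν lam P V)
    {q : ℝ × ℝ × ℝ} (hV : DifferentiableAt ℝ V q) (v : ℝ × ℝ × ℝ) :
    fderiv ℝ V q v = ν * (q.1 * v.1 + lam * q.2.1 * v.2.1 + q.2.2 * v.2.2)
      + (![v.2.2, v.2.1] ⬝ᵥ P *ᵥ ![q.2.2, q.2.1] + ![q.2.2, q.2.1] ⬝ᵥ P *ᵥ ![v.2.2, v.2.1]) := by
  refine fderiv_apply_eq_of_sq_expansion (c := V v) hV fun t => ?_
  rw [hVform (q + t • v), hVform q, hVform v]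
  simp only [dotProduct, mulVec, Fin.sum_univ_two, Prod.fst_add, Prod.snd_add,
    Prod.smul_fst, Prod.smul_snd, smul_eq_mul, Matrix.cons_val_zero, Matrix.cons_val_one]
  ring

theorem fderiv_apply_le_of_form
    (hVform : HasLyapunovForm ν lam P V)
    (hν : 0 < ν) (hlam : 0 < lam)
    {q : ℝ × ℝ × ℝ} (hV : DifferentiableAt ℝ V q) (v : ℝ × ℝ × ℝ) :
    fderiv ℝ V q v ≤ ν * q.1 * v.1
      + couplingGain ν lam P * (|q.2.2| + |q.2.1|) * (|v.2.2| + |v.2.1|) := by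
  rw [fderiv_apply_of_form hVform hV, couplingGain]
  set E := ∑ i, ∑ j, |P i j|
  set S := |q.2.2| + |q.2.1|
  set T := |v.2.2| + |v.2.1|
  have hx : |![v.2.2, v.2.1] ⬝ᵥ P *ᵥ ![q.2.2, q.2.1]| ≤ E * T * S := by
    convert abs_dotProduct_mulVec_le P ![v.2.2, v.2.1] ![q.2.2, q.2.1] using 3 <;>
      simp [S, T, Fin.sum_univ_two]
  have hy : |![q.2.2, q.2.1] ⬝ᵥ P *ᵥ ![v.2.2, v.2.1]| ≤ E * S * T := by
    convert abs_dotProduct_mulVec_le P ![q.2.2, q.2.1] ![v.2.2, v.2.1] using 3 <;>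
      simp [S, T, Fin.sum_univ_two]
  have hφ : q.2.1 * v.2.1 ≤ S * T := by
    calc q.2.1 * v.2.1 ≤ |q.2.1| * |v.2.1| := (le_abs_self _).trans_eq (abs_mul _ _)
      _ ≤ S * T := by gcongr <;> exact le_add_of_nonneg_left (abs_nonneg _)
  have hα : q.2.2 * v.2.2 ≤ S * T := by
    calc q.2.2 * v.2.2 ≤ |q.2.2| * |v.2.2| := (le_abs_self _).trans_eq (abs_mul _ _)
      _ ≤ S * T := by gcongr <;> exact le_add_of_nonneg_right (abs_nonneg _)
  nlinarith [abs_le.mp hx, abs_le.mp hy, mul_le_mul_of_nonneg_left hφ (mul_pos hν hlam).le,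
    mul_le_mul_of_nonneg_left hα hν.le]

theorem fderiv_apply_perturbation_le {kρ : ℝ} (hVform : HasLyapunovForm ν lam P V)
    (hν : 0 < ν) (hlam : 0 < lam) (hkρ : 0 < kρ) {ρ φ α : ℝ}
    (hV : DifferentiableAt ℝ V (ρ, φ, α)) (z w : ℝ) :
    fderiv ℝ V (ρ, φ, α) (ρ * cos α * z, sin α * z, w - sin α * z)
      ≤ ν * kρ * cos α ^ 2 * ρ ^ 2 / 2 + (α ^ 2 + φ ^ 2) / 4
        + (ν / (2 * kρ) * ρ ^ 2 + 10 * couplingGain ν lam P ^ 2) * (z ^ 2 + w ^ 2) := by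
  have h := fderiv_apply_le_of_form hVform hν hlam hV (ρ * cos α * z, sin α * z, w - sin α * z)
  dsimp only at h
  set M := couplingGain ν lam P
  have hsin : |sin α * z| ≤ |z| := by
    rw [abs_mul]
    exact mul_le_of_le_one_left (abs_nonneg z) (abs_sin_le_one α)
  have hT : |w - sin α * z| + |sin α * z| ≤ 2 * |z| + |w| := by
    linarith [abs_sub w (sin α * z)]
  -- Young's inequality, once for each coupling term
  have hρ : ν * ρ * (ρ * cos α * z)
      ≤ ν * kρ * cos α ^ 2 * ρ ^ 2 / 2 + ν / (2 * kρ) * ρ ^ 2 * z ^ 2 := by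
    have hgap : ν * kρ * cos α ^ 2 * ρ ^ 2 / 2 + ν / (2 * kρ) * ρ ^ 2 * z ^ 2
        - ν * ρ * (ρ * cos α * z) = ν * ρ ^ 2 * (kρ * cos α - z) ^ 2 / (2 * kρ) := by
      field_simp
      ring
    have : 0 ≤ ν * ρ ^ 2 * (kρ * cos α - z) ^ 2 / (2 * kρ) := by positivity
    linarith
  have hαφ : M * (|α| + |φ|) * (|w - sin α * z| + |sin α * z|)
      ≤ (α ^ 2 + φ ^ 2) / 4 + 10 * M ^ 2 * (z ^ 2 + w ^ 2) := by
    set S := |α| + |φ|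
    set T := |w - sin α * z| + |sin α * z|
    have hS : S ^ 2 ≤ 2 * (α ^ 2 + φ ^ 2) := by
      nlinarith [sq_nonneg (|α| - |φ|), sq_abs α, sq_abs φ]
    have hT2 : T ^ 2 ≤ 5 * (z ^ 2 + w ^ 2) := by
      have hT0 : 0 ≤ T := by positivity
      nlinarith [sq_nonneg (|z| - 2 * |w|), sq_abs z, sq_abs w, abs_nonneg z, abs_nonneg w]
    nlinarith [sq_nonneg (S - 4 * M * T)]
  have : 0 ≤ ν / (2 * kρ) * ρ ^ 2 * w ^ 2 := by positivity
  nlinarith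

end QuadraticForm

noncomputable def cascadeLyapunov (V : ℝ × ℝ × ℝ → ℝ) (μ kz kω : ℝ) (p : ℝ × ℝ × ℝ × ℝ × ℝ) : ℝ :=
  μ * Real.log (V (p.1, p.2.1, p.2.2.1) + 1) + (p.2.2.2.1 ^ 2 / kz + p.2.2.2.2 ^ 2 / kω) / 2

section CascadeLyapunov

variable {V : ℝ × ℝ × ℝ → ℝ} {μ kz kω : ℝ}

theorem cascadeLyapunov_zero (hV0 : V (0, 0, 0) = 0) :
    cascadeLyapunov V μ kz kω (0, 0, 0, 0, 0) = 0 := by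
  simp [cascadeLyapunov, hV0]

theorem cascadeLyapunov_pos (hμ : 0 < μ) (hkz : 0 < kz) (hkω : 0 < kω) (hV0 : V (0, 0, 0) = 0)
    (hVpos : ∀ q, q ≠ (0, 0, 0) → 0 < V q) {p : ℝ × ℝ × ℝ × ℝ × ℝ} (hp : p ≠ (0, 0, 0, 0, 0)) :
    0 < cascadeLyapunov V μ kz kω p := by
  obtain ⟨ρ, φ, α, z, w⟩ := p
  unfold cascadeLyapunov
  dsimp only
  by_cases hq : (ρ, φ, α) = (0, 0, 0)
  · obtain ⟨rfl, rfl, rfl⟩ : ρ = 0 ∧ φ = 0 ∧ α = 0 := by simpa using hq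
    have hzw : z ≠ 0 ∨ w ≠ 0 := by
      by_contra! h
      exact hp (by rw [h.1, h.2])
    rw [hV0, zero_add, Real.log_one, mul_zero, zero_add]
    rcases hzw with hz | hw <;> positivity
  · have := Real.log_pos (lt_add_of_pos_left 1 (hVpos _ hq))
    positivity

theorem fderiv_cascadeLyapunov_apply (p v : ℝ × ℝ × ℝ × ℝ × ℝ)
    (hV : DifferentiableAt ℝ V (p.1, p.2.1, p.2.2.1)) (hV0 : 0 ≤ V (p.1, p.2.1, p.2.2.1)) :
    fderiv ℝ (cascadeLyapunov V μ kz kω) p v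
      = μ / (V (p.1, p.2.1, p.2.2.1) + 1) * fderiv ℝ V (p.1, p.2.1, p.2.2.1) (v.1, v.2.1, v.2.2.1)
        + p.2.2.2.1 * v.2.2.2.1 / kz + p.2.2.2.2 * v.2.2.2.2 / kω := by
  have hsnd : HasFDerivAt (𝕜 := ℝ) (fun p : ℝ × ℝ × ℝ × ℝ × ℝ => p.2) _ p := hasFDerivAt_snd
  have hπ := (hasFDerivAt_fst (𝕜 := ℝ)).prodMk (hsnd.fst.prodMk hsnd.snd.fst)
  have hlog := ((hV.hasFDerivAt.comp p hπ).add_const 1).log (by positivity)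
  have hz := hsnd.snd.snd.fst
  have hw := hsnd.snd.snd.snd
  have H : HasFDerivAt (cascadeLyapunov V μ kz kω) _ p :=
    (hlog.const_mul μ).add
      ((((hz.pow 2).mul_const kz⁻¹).add ((hw.pow 2).mul_const kω⁻¹)).mul_const 2⁻¹)
  rw [H.fderiv]
  simp only [Function.comp_apply, Nat.add_one_sub_one, pow_one, nsmul_eq_mul, Nat.cast_ofNat,
    smul_add, _root_.add_apply, _root_.smul_apply, ContinuousLinearMap.comp_apply,
    ContinuousLinearMap.prod_apply, ContinuousLinearMap.coe_fst', ContinuousLinearMap.coe_snd',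
    smul_eq_mul]
  ring

end CascadeLyapunov

theorem dissipation_pos {ν kρ ρ φ α z w : ℝ} (hν : 0 < ν) (hkρ : 0 < kρ)
    (hp : (ρ, φ, α, z, w) ≠ (0, 0, 0, 0, 0)) :
    0 < ν * kρ * cos α ^ 2 * ρ ^ 2 / 2 + (α ^ 2 + φ ^ 2) / 4 + (z ^ 2 + w ^ 2) := by
  by_contra! h
  have hsq : ∀ x : ℝ, 0 ≤ x ^ 2 := sq_nonneg
  have hρ0 : 0 ≤ ν * kρ * cos α ^ 2 * ρ ^ 2 := by positivity
  obtain ⟨rfl, rfl, rfl, rfl⟩ : α = 0 ∧ φ = 0 ∧ z = 0 ∧ w = 0 := by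
    refine ⟨?_, ?_, ?_, ?_⟩ <;> apply pow_eq_zero_iff two_ne_zero |>.mp <;>
      linarith [hsq α, hsq φ, hsq z, hsq w]
  have : ρ ≠ 0 := fun hρ => hp (by rw [hρ])
  have : 0 < ν * kρ * cos 0 ^ 2 * ρ ^ 2 := by rw [cos_zero]; positivity
  linarith

theorem mul_sub_neg_of_le_neg_add {u C X Z D : ℝ} (hu : 0 < u) (huC : u * C ≤ 1 / 2)
    (hX : 0 ≤ X) (hZ : 0 ≤ Z) (hXZ : 0 < X + Z) (hD : D ≤ -X + C * Z) : u * D - Z < 0 := by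
  have h1 := mul_le_mul_of_nonneg_left hD hu.le
  have h2 := mul_le_mul_of_nonneg_right huC hZ
  rcases hZ.eq_or_lt with rfl | hZ
  · nlinarith
  · nlinarith

theorem fderiv_cascadeLyapunov_apply_neg {ν lam kρ kz kω r μ : ℝ} {P : Matrix (Fin 2) (Fin 2) ℝ}
    {V : ℝ × ℝ × ℝ → ℝ} (hVform : HasLyapunovForm ν lam P V)
    (hν : 0 < ν) (hlam : 0 < lam) (hkρ : 0 < kρ) (hkz : 0 < kz) (hkω : 0 < kω) (hμ : 0 < μ)
    (hμr : μ * (ν * r ^ 2 / (2 * kρ) + 10 * couplingGain ν lam P ^ 2) ≤ 1 / 2)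
    {ρ φ α z w : ℝ} (hp : (ρ, φ, α, z, w) ≠ (0, 0, 0, 0, 0)) (hρr : ρ ^ 2 ≤ r ^ 2)
    (hV : DifferentiableAt ℝ V (ρ, φ, α)) (hV0 : 0 ≤ V (ρ, φ, α)) {d : ℝ × ℝ × ℝ}
    (hd : fderiv ℝ V (ρ, φ, α) d ≤ -ν * kρ * cos α ^ 2 * ρ ^ 2 - (α ^ 2 + φ ^ 2) / 2)
    {v : ℝ × ℝ × ℝ × ℝ × ℝ}
    (hv : (v.1, v.2.1, v.2.2.1) = d + (ρ * cos α * z, sin α * z, w - sin α * z))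
    (hvz : v.2.2.2.1 = -kz * z) (hvw : v.2.2.2.2 = -kω * w) :
    fderiv ℝ (cascadeLyapunov V μ kz kω) (ρ, φ, α, z, w) v < 0 := by
  rw [fderiv_cascadeLyapunov_apply _ _ hV hV0]
  dsimp only
  rw [hv, map_add, hvz, hvw]
  have hpert := fderiv_apply_perturbation_le hVform hν hlam hkρ hV z w
  set u := μ / (V (ρ, φ, α) + 1)
  have hu : 0 < u := by positivity
  have huC : u * (ν * r ^ 2 / (2 * kρ) + 10 * couplingGain ν lam P ^ 2) ≤ 1 / 2 := by
    refine le_trans ?_ hμr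
    gcongr
    exact div_le_self hμ.le (le_add_of_nonneg_left hV0)
  have hρZ : ν / (2 * kρ) * ρ ^ 2 * (z ^ 2 + w ^ 2) ≤ ν * r ^ 2 / (2 * kρ) * (z ^ 2 + w ^ 2) := by
    rw [div_mul_eq_mul_div]
    gcongr
  have hdecay := mul_sub_neg_of_le_neg_add hu huC (by positivity) (by positivity)
    (dissipation_pos hν hkρ hp) (D := fderiv ℝ V (ρ, φ, α) d
      + fderiv ℝ V (ρ, φ, α) (ρ * cos α * z, sin α * z, w - sin α * z)) (by linarith)
  have hz : z * (-kz * z) / kz = -z ^ 2 := by field_simp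
  have hw : w * (-kω * w) / kω = -w ^ 2 := by field_simp
  linarith

theorem strict_Lyapunov_cascade_general
    (kρ kα kz kω lam : ℝ)
    (hkρ : 0 < kρ) (hkz : 0 < kz) (hkω : 0 < kω) (hlam : 0 < lam)
    (r : ℝ)
    (ν : ℝ) (hν : 0 < ν)
    (P : Matrix (Fin 2) (Fin 2) ℝ)
    (V : ℝ × ℝ × ℝ → ℝ)
    (hVform : ∀ q : ℝ × ℝ × ℝ,
      V q = ν * ((q.1 ^ 2 + lam * q.2.1 ^ 2 + q.2.2 ^ 2) / 2)
        + ![q.2.2, q.2.1] ⬝ᵥ P.mulVec ![q.2.2, q.2.1])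
    (hVC1 : ContDiff ℝ 1 V)
    (hVpos : V (0, 0, 0) = 0 ∧ ∀ q : ℝ × ℝ × ℝ, q ≠ (0, 0, 0) → 0 < V q)
    (f : ℝ × ℝ × ℝ → ℝ × ℝ × ℝ)
    (hf : ∀ q : ℝ × ℝ × ℝ,
      f q = (-kρ * Real.cos q.2.2 ^ 2 * q.1,
             -kρ * _root_.sinc (2 * q.2.2) * q.2.2,
             -kα * q.2.2 + lam * kρ * _root_.sinc (2 * q.2.2) * q.2.1))
    (hVderiv : ∀ q : ℝ × ℝ × ℝ, Real.sqrt (q.1 ^ 2 + q.2.1 ^ 2 + q.2.2 ^ 2) ≤ r →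
      fderiv ℝ V q (f q)
        ≤ -ν * kρ * Real.cos q.2.2 ^ 2 * q.1 ^ 2 - (q.2.2 ^ 2 + q.2.1 ^ 2) / 2)
    (F : ℝ × ℝ × ℝ × ℝ × ℝ → ℝ × ℝ × ℝ × ℝ × ℝ)
    (hF : ∀ p : ℝ × ℝ × ℝ × ℝ × ℝ,
      F p = (-kρ * Real.cos p.2.2.1 ^ 2 * p.1 + p.1 * Real.cos p.2.2.1 * p.2.2.2.1,
             -kρ * _root_.sinc (2 * p.2.2.1) * p.2.2.1 + Real.sin p.2.2.1 * p.2.2.2.1,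
             -kα * p.2.2.1 + lam * kρ * _root_.sinc (2 * p.2.2.1) * p.2.1
               - Real.sin p.2.2.1 * p.2.2.2.1 + p.2.2.2.2,
             -kz * p.2.2.2.1,
             -kω * p.2.2.2.2)) :
    ∃ μbar > (0 : ℝ), ∀ μ : ℝ, 0 < μ → μ ≤ μbar →
      ∀ 𝒱 : ℝ × ℝ × ℝ × ℝ × ℝ → ℝ,
        (∀ p : ℝ × ℝ × ℝ × ℝ × ℝ,
          𝒱 p = μ * Real.log (V (p.1, p.2.1, p.2.2.1) + 1)
            + (p.2.2.2.1 ^ 2 / kz + p.2.2.2.2 ^ 2 / kω) / 2) →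
        (𝒱 (0, 0, 0, 0, 0) = 0 ∧
          ∀ p : ℝ × ℝ × ℝ × ℝ × ℝ, p ≠ (0, 0, 0, 0, 0) → 0 < 𝒱 p) ∧
        (∀ p : ℝ × ℝ × ℝ × ℝ × ℝ,
          Real.sqrt (p.1 ^ 2 + p.2.1 ^ 2 + p.2.2.1 ^ 2) ≤ r →
          p ≠ (0, 0, 0, 0, 0) → fderiv ℝ 𝒱 p (F p) < 0) := by
  obtain ⟨hV0, hVpos⟩ := hVpos
  have hVd : Differentiable ℝ V := hVC1.differentiable one_ne_zero
  have hVnn : ∀ q, 0 ≤ V q := fun q => by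
    rcases eq_or_ne q (0, 0, 0) with rfl | hq
    exacts [hV0.ge, (hVpos q hq).le]
  set C := ν * r ^ 2 / (2 * kρ) + 10 * couplingGain ν lam P ^ 2
  have hC : 0 < C := by have := couplingGain_pos hν hlam P; positivity
  refine ⟨1 / (2 * C), by positivity, fun μ hμ hμC 𝒱 h𝒱 => ?_⟩
  obtain rfl : 𝒱 = cascadeLyapunov V μ kz kω := funext h𝒱
  refine ⟨⟨cascadeLyapunov_zero hV0, fun p hp => cascadeLyapunov_pos hμ hkz hkω hV0 hVpos hp⟩, ?_⟩
  rintro ⟨ρ, φ, α, z, w⟩ hball hp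
  have hρr : ρ ^ 2 ≤ r ^ 2 := by
    nlinarith [(Real.sqrt_le_iff.mp hball).2, sq_nonneg φ, sq_nonneg α]
  have hμr : μ * C ≤ 1 / 2 := by
    have := (le_div_iff₀ (by positivity)).mp hμC
    linarith
  refine fderiv_cascadeLyapunov_apply_neg hVform hν hlam hkρ hkz hkω hμ hμr hp hρr (hVd _)
    (hVnn _) (hVderiv (ρ, φ, α) hball) ?_ (by rw [hF]) (by rw [hF])
  rw [hF, hf]
  ext <;> simp only [Prod.fst_add, Prod.snd_add]; ring

/-- There exists `μ̄ > 0` such that for every `μ ∈ (0, μ̄]`, the function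
`𝒱_r(ρ,φ,α,z,ω̃) = μ ln(V(ρ,φ,α) + 1) + ½(z²/k_z + ω̃²/k_ω)` is a strict
Lyapunov function on `B_r × ℝ²` for the full closed-loop cascaded system.
Coordinates: `p = (ρ, φ, α, z, ω̃)`. -/
theorem strict_Lyapunov_cascade
    (kρ kα kz kω lam : ℝ)
    (hkρ : 0 < kρ) (hkα : 0 < kα) (hkz : 0 < kz) (hkω : 0 < kω) (hlam : 0 < lam)
    (r : ℝ) (hr : 0 < r)
    (ν : ℝ) (hν : 0 < ν)
    (P : Matrix (Fin 2) (Fin 2) ℝ) (hPsymm : P.IsSymm) (hPpos : P.PosDef)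
    (V : ℝ × ℝ × ℝ → ℝ)
    (hVform : ∀ q : ℝ × ℝ × ℝ,
      V q = ν * ((q.1 ^ 2 + lam * q.2.1 ^ 2 + q.2.2 ^ 2) / 2)
        + ![q.2.2, q.2.1] ⬝ᵥ P.mulVec ![q.2.2, q.2.1])
    (hVC1 : ContDiff ℝ 1 V)
    (hVpos : V (0, 0, 0) = 0 ∧ ∀ q : ℝ × ℝ × ℝ, q ≠ (0, 0, 0) → 0 < V q)
    (f : ℝ × ℝ × ℝ → ℝ × ℝ × ℝ)
    (hf : ∀ q : ℝ × ℝ × ℝ,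
      f q = (-kρ * Real.cos q.2.2 ^ 2 * q.1,
             -kρ * _root_.sinc (2 * q.2.2) * q.2.2,
             -kα * q.2.2 + lam * kρ * _root_.sinc (2 * q.2.2) * q.2.1))
    (hVderiv : ∀ q : ℝ × ℝ × ℝ, Real.sqrt (q.1 ^ 2 + q.2.1 ^ 2 + q.2.2 ^ 2) ≤ r →
      fderiv ℝ V q (f q)
        ≤ -ν * kρ * Real.cos q.2.2 ^ 2 * q.1 ^ 2 - (q.2.2 ^ 2 + q.2.1 ^ 2) / 2)
    (F : ℝ × ℝ × ℝ × ℝ × ℝ → ℝ × ℝ × ℝ × ℝ × ℝ)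
    (hF : ∀ p : ℝ × ℝ × ℝ × ℝ × ℝ,
      F p = (-kρ * Real.cos p.2.2.1 ^ 2 * p.1 + p.1 * Real.cos p.2.2.1 * p.2.2.2.1,
             -kρ * _root_.sinc (2 * p.2.2.1) * p.2.2.1 + Real.sin p.2.2.1 * p.2.2.2.1,
             -kα * p.2.2.1 + lam * kρ * _root_.sinc (2 * p.2.2.1) * p.2.1
               - Real.sin p.2.2.1 * p.2.2.2.1 + p.2.2.2.2,
             -kz * p.2.2.2.1,
             -kω * p.2.2.2.2)) :
    ∃ μbar > (0 : ℝ), ∀ μ : ℝ, 0 < μ → μ ≤ μbar →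
      ∀ 𝒱 : ℝ × ℝ × ℝ × ℝ × ℝ → ℝ,
        (∀ p : ℝ × ℝ × ℝ × ℝ × ℝ,
          𝒱 p = μ * Real.log (V (p.1, p.2.1, p.2.2.1) + 1)
            + (p.2.2.2.1 ^ 2 / kz + p.2.2.2.2 ^ 2 / kω) / 2) →
        (𝒱 (0, 0, 0, 0, 0) = 0 ∧
          ∀ p : ℝ × ℝ × ℝ × ℝ × ℝ, p ≠ (0, 0, 0, 0, 0) → 0 < 𝒱 p) ∧
        (∀ p : ℝ × ℝ × ℝ × ℝ × ℝ,
          Real.sqrt (p.1 ^ 2 + p.2.1 ^ 2 + p.2.2.1 ^ 2) ≤ r →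
          p ≠ (0, 0, 0, 0, 0) → fderiv ℝ 𝒱 p (F p) < 0) :=
  strict_Lyapunov_cascade_general kρ kα kz kω lam hkρ hkz hkω hlam r ν hν P V hVform hVC1 hVpos f hf
    hVderiv F hF
end

section
/- Integrator backstepping of control barrier functions for cascaded systems: Let n, m ≥ 1, let h : ℝⁿ → ℝ be continuously differentiable with int C := {x₁ ∈ ℝⁿ : h(x₁) > 0}, let f : ℝⁿ → ℝⁿ and g : ℝⁿ → ℝ^{n×m} be locally Lipschitz, let B₁ : int C → ℝ be differentiable with B₁(x₁) > 0 on int C and B₁(x₁) → +∞ along any sequence in int C converging to a point with h = 0. Let x₂* : ℝⁿ → ℝᵐ be continuously differentiable and α_B a class-K function such that for all x₁ ∈ int C, ∇B₁(x₁) · (f(x₁) + g(x₁) x₂*(x₁)) < α_B(1/B₁(x₁)). Let H be a symmetric positive definite m×m matrix and define, in the coordinates 𝐱 = (x₁, x̃₂) with x̃₂ := x₂ − x₂*(x₁), the function B(𝐱) := B₁(x₁) + x̃₂ᵀ H x̃₂, and the drift F(𝐱) := (f(x₁) + g(x₁)(x₂*(x₁) + x̃₂), 0) with input matrix G = (0,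 I_m)ᵀ. Then B is a reciprocal control barrier function for the cascaded system ẋ₁ = f(x₁) + g(x₁)x₂, ẋ₂ = u on int C × ℝᵐ: (i) B(𝐱) > 0 for all x₁ ∈ int C; (ii) B(𝐱) → +∞ along any sequence whose x₁-component approaches {h = 0}; and (iii) for every 𝐱 with x₁ ∈ int C, if the derivative of B in the input directions vanishes, i.e. 2x̃₂ᵀH = 0 (equivalently x̃₂ = 0), then ∇B(𝐱) · F(𝐱) − α_B(1/B(𝐱)) < 0. -/
open Matrix Filter

/-! Since `H` is positive definite, `B ≥ B₁`, which gives positivity and the blow-up at the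
boundary. On the set `xt₂ = 0` where the input directions vanish, the quadratic term has zero
derivative and value, so the CBF inequality for `B` at `(x₁, 0)` is exactly the virtual safety
condition for `B₁` at `x₁`. -/

section QuadraticForm

variable {𝕜 ι E : Type*} [NontriviallyNormedField 𝕜] [CompleteSpace 𝕜] [Fintype ι]
  [NormedAddCommGroup E] [NormedSpace 𝕜 E]

theorem Matrix.hasFDerivAt_dotProduct_mulVec_self_zero (A : Matrix ι ι 𝕜) :
    HasFDerivAt (fun y : ι → 𝕜 => y ⬝ᵥ A *ᵥ y) (0 : (ι → 𝕜) →L[𝕜] 𝕜) 0 := by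
  classical
  -- the quadratic form is the diagonal of a bilinear map, continuous in finite dimension
  let b : (ι → 𝕜) →L[𝕜] (ι → 𝕜) →L[𝕜] 𝕜 := LinearMap.toContinuousLinearMap
    ((LinearMap.toContinuousLinearMap : ((ι → 𝕜) →ₗ[𝕜] 𝕜) ≃ₗ[𝕜] _).toLinearMap ∘ₗ
      Matrix.toLinearMap₂' 𝕜 A)
  simpa [b, Matrix.toLinearMap₂'_apply'] using
    b.hasFDerivAt_of_bilinear (hasFDerivAt_id (0 : ι → 𝕜)) (hasFDerivAt_id 0)

theorem HasFDerivAt.add_dotProduct_mulVec_self_snd {φ : E → 𝕜} {φ' : E →L[𝕜] 𝕜} {x : E}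
    (hφ : HasFDerivAt φ φ' x) (A : Matrix ι ι 𝕜) :
    HasFDerivAt (fun p : E × (ι → 𝕜) => φ p.1 + p.2 ⬝ᵥ A *ᵥ p.2)
      (φ'.comp (ContinuousLinearMap.fst 𝕜 E (ι → 𝕜))) (x, 0) := by
  simpa using (hφ.comp (x, 0) hasFDerivAt_fst).fun_add
    (A.hasFDerivAt_dotProduct_mulVec_self_zero.comp (f := Prod.snd) (x, 0) hasFDerivAt_snd)

end QuadraticForm

theorem backstepping_CBF_general
    (n m : ℕ)
    -- admissible set data
    (h : (Fin n → ℝ) → ℝ)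
    -- dynamics
    (f : (Fin n → ℝ) → (Fin n → ℝ))
    (g : (Fin n → ℝ) → Matrix (Fin n) (Fin m) ℝ)
    -- the CBF of the x₁-subsystem
    (B₁ : (Fin n → ℝ) → ℝ)
    (hB₁diff : ∀ x₁ : Fin n → ℝ, 0 < h x₁ → DifferentiableAt ℝ B₁ x₁)
    (hB₁pos : ∀ x₁ : Fin n → ℝ, 0 < h x₁ → 0 < B₁ x₁)
    (hB₁inf : ∀ u : ℕ → (Fin n → ℝ), (∀ k, 0 < h (u k)) →
      (∃ x₀ : Fin n → ℝ, Tendsto u atTop (nhds x₀) ∧ h x₀ = 0) →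
      Tendsto (fun k => B₁ (u k)) atTop atTop)
    -- the virtual controller and the class-K function
    (x₂star : (Fin n → ℝ) → (Fin m → ℝ))
    (αB : ℝ → ℝ)
    -- the virtual safety condition ∇B₁·(f + g x₂*) < α_B(1/B₁) on int C
    (hsafe : ∀ x₁ : Fin n → ℝ, 0 < h x₁ →
      fderiv ℝ B₁ x₁ (f x₁ + (g x₁).mulVec (x₂star x₁)) < αB (1 / B₁ x₁))
    -- the backstepped candidate CBF and the cascade drift
    (H : Matrix (Fin m) (Fin m) ℝ) (hHpos : H.PosDef)
    (B : (Fin n → ℝ) × (Fin m → ℝ) → ℝ)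
    (hB : ∀ (x₁ : Fin n → ℝ) (xt₂ : Fin m → ℝ),
      B (x₁, xt₂) = B₁ x₁ + xt₂ ⬝ᵥ H.mulVec xt₂)
    (F : (Fin n → ℝ) × (Fin m → ℝ) → (Fin n → ℝ) × (Fin m → ℝ))
    (hF : ∀ (x₁ : Fin n → ℝ) (xt₂ : Fin m → ℝ),
      F (x₁, xt₂) = (f x₁ + (g x₁).mulVec (x₂star x₁ + xt₂), 0)) :
    -- (i) positivity on int C × ℝᵐ
    (∀ (x₁ : Fin n → ℝ) (xt₂ : Fin m → ℝ), 0 < h x₁ → 0 < B (x₁, xt₂)) ∧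
    -- (ii) blow-up along sequences approaching the boundary {h = 0}
    (∀ u : ℕ → (Fin n → ℝ) × (Fin m → ℝ), (∀ k, 0 < h (u k).1) →
      (∃ x₀ : Fin n → ℝ, Tendsto (fun k => (u k).1) atTop (nhds x₀) ∧ h x₀ = 0) →
      Tendsto (fun k => B (u k)) atTop atTop) ∧
    -- (iii) the CBF inequality where the input directions vanish
    (∀ (x₁ : Fin n → ℝ) (xt₂ : Fin m → ℝ), 0 < h x₁ → xt₂ = 0 →
      fderiv ℝ B (x₁, xt₂) (F (x₁, xt₂)) - αB (1 / B (x₁, xt₂)) < 0) := by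
  have hBeq : B = fun p => B₁ p.1 + p.2 ⬝ᵥ H *ᵥ p.2 := funext fun p => hB p.1 p.2
  have hB₁_le_B : ∀ p, B₁ p.1 ≤ B p := fun p => by
    rw [hBeq]
    simpa using hHpos.posSemidef.dotProduct_mulVec_nonneg p.2
  refine ⟨fun x₁ xt₂ hx => (hB₁pos x₁ hx).trans_le (hB₁_le_B (x₁, xt₂)),
    fun u hu hconv => tendsto_atTop_mono (fun k => hB₁_le_B (u k)) (hB₁inf _ hu hconv), ?_⟩
  rintro x₁ _ hx rfl
  rw [hBeq, ((hB₁diff x₁ hx).hasFDerivAt.add_dotProduct_mulVec_self_snd H).fderiv, hF]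
  simpa using hsafe x₁ hx

/-- Integrator backstepping of reciprocal control barrier functions for
cascaded systems `ẋ₁ = f(x₁) + g(x₁)x₂`, `ẋ₂ = u`: if `B₁` is a reciprocal CBF
for the `x₁`-subsystem certified by a continuously differentiable virtual
controller `x₂*` and a class-K function `α_B`, then in the coordinates
`𝐱 = (x₁, xt₂)` with `xt₂ = x₂ - x₂*(x₁)`, the function
`B(𝐱) = B₁(x₁) + xt₂ᵀHxt₂` (with `H` symmetric positive definite) is a
reciprocal CBF for the cascade on `int C × ℝᵐ`. -/
theorem backstepping_CBF
    (n m : ℕ) (hn : 1 ≤ n) (hm : 1 ≤ m)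
    -- admissible set data
    (h : (Fin n → ℝ) → ℝ) (hh : ContDiff ℝ 1 h)
    -- dynamics
    (f : (Fin n → ℝ) → (Fin n → ℝ))
    (g : (Fin n → ℝ) → Matrix (Fin n) (Fin m) ℝ)
    (hf : LocallyLipschitz f)
    (hg : LocallyLipschitz (fun (x₁ : Fin n → ℝ) (i : Fin n) (j : Fin m) => g x₁ i j))
    -- the CBF of the x₁-subsystem
    (B₁ : (Fin n → ℝ) → ℝ)
    (hB₁diff : ∀ x₁ : Fin n → ℝ, 0 < h x₁ → DifferentiableAt ℝ B₁ x₁)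
    (hB₁pos : ∀ x₁ : Fin n → ℝ, 0 < h x₁ → 0 < B₁ x₁)
    (hB₁inf : ∀ u : ℕ → (Fin n → ℝ), (∀ k, 0 < h (u k)) →
      (∃ x₀ : Fin n → ℝ, Tendsto u atTop (nhds x₀) ∧ h x₀ = 0) →
      Tendsto (fun k => B₁ (u k)) atTop atTop)
    -- the virtual controller and the class-K function
    (x₂star : (Fin n → ℝ) → (Fin m → ℝ)) (hx₂star : ContDiff ℝ 1 x₂star)
    (αB : ℝ → ℝ) (hαBcont : ContinuousOn αB (Set.Ici 0))
    (hαBmono : StrictMonoOn αB (Set.Ici 0)) (hαB0 : αB 0 = 0)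
    (hαBnonneg : ∀ s : ℝ, 0 ≤ s → 0 ≤ αB s)
    -- the virtual safety condition ∇B₁·(f + g x₂*) < α_B(1/B₁) on int C
    (hsafe : ∀ x₁ : Fin n → ℝ, 0 < h x₁ →
      fderiv ℝ B₁ x₁ (f x₁ + (g x₁).mulVec (x₂star x₁)) < αB (1 / B₁ x₁))
    -- the backstepped candidate CBF and the cascade drift
    (H : Matrix (Fin m) (Fin m) ℝ) (hHsymm : H.IsSymm) (hHpos : H.PosDef)
    (B : (Fin n → ℝ) × (Fin m → ℝ) → ℝ)
    (hB : ∀ (x₁ : Fin n → ℝ) (xt₂ : Fin m → ℝ),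
      B (x₁, xt₂) = B₁ x₁ + xt₂ ⬝ᵥ H.mulVec xt₂)
    (F : (Fin n → ℝ) × (Fin m → ℝ) → (Fin n → ℝ) × (Fin m → ℝ))
    (hF : ∀ (x₁ : Fin n → ℝ) (xt₂ : Fin m → ℝ),
      F (x₁, xt₂) = (f x₁ + (g x₁).mulVec (x₂star x₁ + xt₂), 0)) :
    -- (i) positivity on int C × ℝᵐ
    (∀ (x₁ : Fin n → ℝ) (xt₂ : Fin m → ℝ), 0 < h x₁ → 0 < B (x₁, xt₂)) ∧
    -- (ii) blow-up along sequences approaching the boundary {h = 0}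
    (∀ u : ℕ → (Fin n → ℝ) × (Fin m → ℝ), (∀ k, 0 < h (u k).1) →
      (∃ x₀ : Fin n → ℝ, Tendsto (fun k => (u k).1) atTop (nhds x₀) ∧ h x₀ = 0) →
      Tendsto (fun k => B (u k)) atTop atTop) ∧
    -- (iii) the CBF inequality where the input directions vanish
    (∀ (x₁ : Fin n → ℝ) (xt₂ : Fin m → ℝ), 0 < h x₁ → xt₂ = 0 →
      fderiv ℝ B (x₁, xt₂) (F (x₁, xt₂)) - αB (1 / B (x₁, xt₂)) < 0) :=
  backstepping_CBF_general n m h f g B₁ hB₁diff hB₁pos hB₁inf x₂star αB hsafe H hHpos B hB F hF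
end

section
/- Let h : ℝ² → ℝ be continuously differentiable, int C := {(x, y) : h(x, y) > 0}, let H be a symmetric positive definite 2×2 matrix, and define B(x, y, v, ω) := 1/h(x, y) + (v, ω)ᵀ H (v, ω). Consider the force-controlled unicycle with state (x, y, θ, v, ω) and inputs (u₁, u₂): drift F(x, y, θ, v, ω) = (v cos θ, v sin θ, ω, 0, 0) and input matrix G with columns (0, 0, 0, 1, 0)ᵀ and (0, 0, 0, 0, 1)ᵀ. Then B is a reciprocal control barrier function for this system: (i) B > 0 whenever (x, y) ∈ int C; (ii) B → +∞ along any sequence of states whose (x, y)-component satisfies h(xₙ, yₙ) → 0; and (iii) for every class-K function α_B and every state with (x, y) ∈ int C, if the derivative of B in the input directions vanishes, i.e. 2(v, ω)ᵀH = 0 (equivalently (v, ω) = (0, 0)), then ∇B · F − α_B(1/B) < 0. -/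
open Real Matrix Filter Topology

lemma Matrix.PosSemidef.dotProduct_mulVec_self_nonneg {n : Type*} [Fintype n]
    {H : Matrix n n ℝ} (hH : H.PosSemidef) (x : n → ℝ) : 0 ≤ x ⬝ᵥ H *ᵥ x := by
  simpa using hH.dotProduct_mulVec_nonneg x

lemma one_div_add_pos_of_nonneg {a q : ℝ} (ha : 0 < a) (hq : 0 ≤ q) : 0 < 1 / a + q := by
  positivity

lemma tendsto_one_div_add_atTop {ι : Type*} {l : Filter ι} {f q : ι → ℝ}
    (hf : ∀ i, 0 < f i) (hq : ∀ i, 0 ≤ q i) (hlim : Tendsto f l (𝓝 0)) :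
    Tendsto (fun i => 1 / f i + q i) l atTop := by
  have hinv : Tendsto (fun i => 1 / f i) l atTop := by
    simpa [one_div, Pi.inv_def] using (tendsto_nhdsWithin_iff.mpr
      ⟨hlim, Eventually.of_forall hf⟩ : Tendsto f l (𝓝[>] 0)).inv_tendsto_nhdsGT_zero
  exact tendsto_atTop_mono (fun i => le_add_of_nonneg_right (hq i)) hinv

lemma StrictMonoOn.pos_of_map_zero {α : ℝ → ℝ} (hmono : StrictMonoOn α (Set.Ici 0))
    (h0 : α 0 = 0) {s : ℝ} (hs : 0 < s) : 0 < α s :=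
  h0 ▸ hmono Set.self_mem_Ici hs.le hs

theorem unicycle_dynamic_CBF_general
    (h : ℝ × ℝ → ℝ)
    (H : Matrix (Fin 2) (Fin 2) ℝ) (hHpos : H.PosDef)
    (B : ℝ × ℝ × ℝ × ℝ × ℝ → ℝ)
    (hB : ∀ p : ℝ × ℝ × ℝ × ℝ × ℝ,
      B p = 1 / h (p.1, p.2.1)
        + ![p.2.2.2.1, p.2.2.2.2] ⬝ᵥ H.mulVec ![p.2.2.2.1, p.2.2.2.2])
    (F : ℝ × ℝ × ℝ × ℝ × ℝ → ℝ × ℝ × ℝ × ℝ × ℝ)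
    (hF : ∀ p : ℝ × ℝ × ℝ × ℝ × ℝ,
      F p = (p.2.2.2.1 * Real.cos p.2.2.1, p.2.2.2.1 * Real.sin p.2.2.1,
             p.2.2.2.2, 0, 0)) :
    -- (i) positivity whenever (x, y) ∈ int C
    (∀ p : ℝ × ℝ × ℝ × ℝ × ℝ, 0 < h (p.1, p.2.1) → 0 < B p) ∧
    -- (ii) blow-up along sequences whose (x, y)-component satisfies h → 0
    (∀ u : ℕ → ℝ × ℝ × ℝ × ℝ × ℝ, (∀ k, 0 < h ((u k).1, (u k).2.1)) →
      Tendsto (fun k => h ((u k).1, (u k).2.1)) atTop (nhds 0) →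
      Tendsto (fun k => B (u k)) atTop atTop) ∧
    -- (iii) the CBF inequality where the input directions vanish
    (∀ αB : ℝ → ℝ, ContinuousOn αB (Set.Ici 0) → StrictMonoOn αB (Set.Ici 0) →
      αB 0 = 0 → (∀ s : ℝ, 0 ≤ s → 0 ≤ αB s) →
      ∀ p : ℝ × ℝ × ℝ × ℝ × ℝ, 0 < h (p.1, p.2.1) →
        p.2.2.2.1 = 0 → p.2.2.2.2 = 0 →
        fderiv ℝ B p (F p) - αB (1 / B p) < 0) := by
  have hquad (v w : ℝ) : 0 ≤ ![v, w] ⬝ᵥ H *ᵥ ![v, w] :=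
    hHpos.posSemidef.dotProduct_mulVec_self_nonneg _
  refine ⟨fun p hp => ?_, fun u hpos hlim => ?_, fun αB _ hmono h0 _ p hp hv hw => ?_⟩
  · exact hB p ▸ one_div_add_pos_of_nonneg hp (hquad _ _)
  · simp_rw [hB]
    exact tendsto_one_div_add_atTop hpos (fun k => hquad _ _) hlim
  · have hF_rest : F p = 0 := by
      rw [hF p, hv, hw]
      simp only [zero_mul, Prod.mk_zero_zero]
    have hB_rest : 1 / B p = h (p.1, p.2.1) := by
      rw [hB p, hv, hw]
      simp
    rw [hF_rest, map_zero, hB_rest, zero_sub, neg_lt_zero]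
    exact hmono.pos_of_map_zero h0 hp

/-- For the force-controlled unicycle `ẋ = v cos θ, ẏ = v sin θ, θ̇ = ω,
v̇ = u₁, ω̇ = u₂`, the backstepped function
`B(x, y, v, ω) = 1/h(x, y) + (v, ω)ᵀH(v, ω)` (with `H` symmetric positive
definite) is a reciprocal control barrier function with respect to
`C = {h ≥ 0}`: it is positive when `h(x,y) > 0`, blows up along sequences of
states whose `(x,y)`-component approaches `{h = 0}`, and wherever the
derivative of `B` in the input directions vanishes, i.e. `(v, ω) = (0, 0)`,
one has `∇B · F − α_B(1/B) < 0` for every class-K function `α_B`.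
Coordinates: `p = (x, y, θ, v, ω)`. -/
theorem unicycle_dynamic_CBF
    (h : ℝ × ℝ → ℝ) (hh : ContDiff ℝ 1 h)
    (H : Matrix (Fin 2) (Fin 2) ℝ) (hHsymm : H.IsSymm) (hHpos : H.PosDef)
    (B : ℝ × ℝ × ℝ × ℝ × ℝ → ℝ)
    (hB : ∀ p : ℝ × ℝ × ℝ × ℝ × ℝ,
      B p = 1 / h (p.1, p.2.1)
        + ![p.2.2.2.1, p.2.2.2.2] ⬝ᵥ H.mulVec ![p.2.2.2.1, p.2.2.2.2])
    (F : ℝ × ℝ × ℝ × ℝ × ℝ → ℝ × ℝ × ℝ × ℝ × ℝ)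
    (hF : ∀ p : ℝ × ℝ × ℝ × ℝ × ℝ,
      F p = (p.2.2.2.1 * Real.cos p.2.2.1, p.2.2.2.1 * Real.sin p.2.2.1,
             p.2.2.2.2, 0, 0)) :
    -- (i) positivity whenever (x, y) ∈ int C
    (∀ p : ℝ × ℝ × ℝ × ℝ × ℝ, 0 < h (p.1, p.2.1) → 0 < B p) ∧
    -- (ii) blow-up along sequences whose (x, y)-component satisfies h → 0
    (∀ u : ℕ → ℝ × ℝ × ℝ × ℝ × ℝ, (∀ k, 0 < h ((u k).1, (u k).2.1)) →
      Tendsto (fun k => h ((u k).1, (u k).2.1)) atTop (nhds 0) →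
      Tendsto (fun k => B (u k)) atTop atTop) ∧
    -- (iii) the CBF inequality where the input directions vanish
    (∀ αB : ℝ → ℝ, ContinuousOn αB (Set.Ici 0) → StrictMonoOn αB (Set.Ici 0) →
      αB 0 = 0 → (∀ s : ℝ, 0 ≤ s → 0 ≤ αB s) →
      ∀ p : ℝ × ℝ × ℝ × ℝ × ℝ, 0 < h (p.1, p.2.1) →
        p.2.2.2.1 = 0 → p.2.2.2.2 = 0 →
        fderiv ℝ B p (F p) - αB (1 / B p) < 0) :=
  unicycle_dynamic_CBF_general h H hHpos B hB F hF
end
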